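/- Let d ≥ 1 and let ρ be a d²×d² complex matrix of trace 1. Then for every d×d unitary matrix U, tr[ρ (I ⊗ U) |φ₊⟩⟨φ₊| (I ⊗ U†)] = 1/d² + (1/d²) Σ_{(i,j)≠(0,0)} tr[ρ (A_{ij} ⊗ U A_{−i,j} U†)], where the sum runs over all (i,j) ∈ Z_d × Z_d with (i,j) ≠ (0,0). -/

import Mathlib

/-! Write `ω ^ k` as the standard additive character `ψ k` of `ZMod d`. The entry of
`∑ᵢⱼ A_{ij} ⊗ A_{-i,j}` at `((m, m'), (n, n'))` vanishes unless `n - m = n' - m'`, and is then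
`∑ᵢ ψ (i (m - m'))`; by orthogonality of characters this is `d` if `m = m'` and `0` otherwise.
Hence `∑ᵢⱼ A_{ij} ⊗ A_{-i,j} = d² |φ₊⟩⟨φ₊|`. Conjugating by `I ⊗ U` only replaces the second
factors by `U A_{-i,j} U†`, and against `ρ` the term `(i, j) = (0, 0)` contributes `tr ρ = 1`. -/

open Matrix Kronecker Finset

/-- ω = exp(2πi/d), a fixed primitive d-th root of unity. -/
noncomputable def omg (d : ℕ) : ℂ := Complex.exp (2 * Real.pi * Complex.I / d)

/-- Principal basis matrix A_{ij} = Σ_{m ∈ Z_d} ω^{im} E_{m, m+j},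
i.e. (A_{ij})_{m, m+j} = ω^{im}, indices mod d. -/
noncomputable def A (d : ℕ) [NeZero d] (i j : ZMod d) : Matrix (ZMod d) (ZMod d) ℂ :=
  Matrix.of fun m n => if n = m + j then omg d ^ (i * m).val else 0

/-- Frobenius norm ‖M‖_F = √(tr(M†M)). -/
noncomputable def frob {n : Type*} [Fintype n] (M : Matrix n n ℂ) : ℝ :=
  Real.sqrt (Mᴴ * M).trace.re

/-- The maximally entangled state |φ₊⟩ = (1/√d) Σ_i |ii⟩. -/
noncomputable def phiPlus (d : ℕ) [NeZero d] : ZMod d × ZMod d → ℂ :=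
  fun p => if p.1 = p.2 then ((1 / Real.sqrt d : ℝ) : ℂ) else 0

/-- The projector |φ₊⟩⟨φ₊| onto the maximally entangled state. -/
noncomputable def phiProj (d : ℕ) [NeZero d] :
    Matrix (ZMod d × ZMod d) (ZMod d × ZMod d) ℂ :=
  Matrix.vecMulVec (phiPlus d) (star (phiPlus d))

open ZMod in
lemma omg_pow_val {d : ℕ} [NeZero d] (k : ZMod d) : omg d ^ k.val = stdAddChar k := by
  rw [omg, ← Complex.exp_nat_mul, stdAddChar_apply, toCircle_apply]
  congr 1
  ring

lemma A_apply {d : ℕ} [NeZero d] (i j m n : ZMod d) :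
    A d i j m n = if n = m + j then ZMod.stdAddChar (i * m) else 0 := by
  simp [A, omg_pow_val]

lemma A_zero_zero (d : ℕ) [NeZero d] : A d 0 0 = 1 := by
  ext m n
  simp [A_apply, Matrix.one_apply, eq_comm]

lemma phiProj_apply (d : ℕ) [NeZero d] (m m' n n' : ZMod d) :
    phiProj d (m, m') (n, n') = if m = m' ∧ n = n' then 1 / (d : ℂ) else 0 := by
  have hs : (Real.sqrt d : ℂ) * Real.sqrt d = d := by
    exact_mod_cast Real.mul_self_sqrt (Nat.cast_nonneg d)
  simp only [phiProj, vecMulVec_apply, Pi.star_apply, phiPlus]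
  split_ifs <;> simp_all [← hs]

lemma sum_kronecker_A_neg_apply (d : ℕ) [NeZero d] (m m' n n' : ZMod d) :
    (∑ ij : ZMod d × ZMod d, A d ij.1 ij.2 ⊗ₖ A d (-ij.1) ij.2) (m, m') (n, n') =
      if m = m' ∧ n = n' then (d : ℂ) else 0 := by
  have hj (i : ZMod d) : ∑ j, A d i j m n * A d (-i) j m' n' =
      if n' = m' + (n - m) then ZMod.stdAddChar (i * (m - m')) else 0 := by
    rw [Finset.sum_eq_single (n - m) (fun j _ hjn => ?_) (by simp)]
    · simp only [A_apply, add_sub_cancel, if_true, mul_ite, mul_zero]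
      rw [← AddChar.map_add_eq_mul, show i * m + -i * m' = i * (m - m') by ring]
    · rw [A_apply, if_neg (fun h => hjn (by rw [h]; ring)), zero_mul]
  simp only [Matrix.sum_apply, kroneckerMap_apply, Fintype.sum_prod_type, hj]
  rw [Finset.sum_ite_irrel, Finset.sum_const_zero,
    AddChar.sum_mulShift _ (ZMod.isPrimitive_stdAddChar d), ZMod.card]
  by_cases hm : m = m'
  · subst hm
    simp [eq_comm]
  · simp [hm, sub_eq_zero]

lemma phiProj_eq_smul_sum_kronecker_A_neg (d : ℕ) [NeZero d] :
    phiProj d = (1 / (d : ℂ) ^ 2) • ∑ ij : ZMod d × ZMod d, A d ij.1 ij.2 ⊗ₖ A d (-ij.1) ij.2 := by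
  have hd : (d : ℂ) ≠ 0 := Nat.cast_ne_zero.2 (NeZero.ne d)
  ext ⟨m, m'⟩ ⟨n, n'⟩
  rw [Matrix.smul_apply, phiProj_apply, sum_kronecker_A_neg_apply, smul_eq_mul, mul_ite,
    mul_zero]
  congr 1
  field_simp

lemma one_kronecker_mul_kronecker_mul_one_kronecker {ι κ R : Type*} [Fintype ι] [Fintype κ]
    [DecidableEq ι] [CommRing R] (U V : Matrix κ κ R) (M : Matrix ι ι R) (N : Matrix κ κ R) :
    ((1 : Matrix ι ι R) ⊗ₖ U) * (M ⊗ₖ N) * ((1 : Matrix ι ι R) ⊗ₖ V) = M ⊗ₖ (U * N * V) := by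
  rw [← mul_kronecker_mul, ← mul_kronecker_mul, Matrix.one_mul, Matrix.mul_one]

theorem trace_fidelity_expansion_general (d : ℕ) [NeZero d]
    (ρ : Matrix (ZMod d × ZMod d) (ZMod d × ZMod d) ℂ) (htr : ρ.trace = 1)
    (U : Matrix (ZMod d) (ZMod d) ℂ) (hU : U ∈ Matrix.unitaryGroup (ZMod d) ℂ) :
    (ρ * (((1 : Matrix (ZMod d) (ZMod d) ℂ) ⊗ₖ U) * phiProj d *
        ((1 : Matrix (ZMod d) (ZMod d) ℂ) ⊗ₖ Uᴴ))).trace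
      = 1 / (d : ℂ) ^ 2 + (1 / (d : ℂ) ^ 2) *
          ∑ ij ∈ Finset.univ.filter (fun ij : ZMod d × ZMod d => ij ≠ (0, 0)),
            (ρ * (A d ij.1 ij.2 ⊗ₖ (U * A d (-ij.1) ij.2 * Uᴴ))).trace := by
  have hUU : U * Uᴴ = 1 := Matrix.mem_unitaryGroup_iff.1 hU
  have h00 : (ρ * (A d 0 0 ⊗ₖ (U * A d (-0) 0 * Uᴴ))).trace = 1 := by
    rw [neg_zero, A_zero_zero, Matrix.mul_one, hUU, one_kronecker_one, Matrix.mul_one, htr]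
  rw [phiProj_eq_smul_sum_kronecker_A_neg, Matrix.mul_smul, Matrix.smul_mul, Matrix.mul_sum,
    Matrix.sum_mul]
  simp only [one_kronecker_mul_kronecker_mul_one_kronecker]
  rw [Matrix.mul_smul, trace_smul, Matrix.mul_sum, trace_sum, smul_eq_mul,
    ← Finset.add_sum_erase _ _ (mem_univ (0, 0)), h00, Finset.filter_ne', mul_add, mul_one]

/-- For any d²×d² matrix ρ of trace 1 and any unitary U,
tr[ρ (I⊗U) |φ₊⟩⟨φ₊| (I⊗U†)] = 1/d² + (1/d²) Σ_{(i,j)≠(0,0)} tr[ρ (A_{ij} ⊗ U A_{−i,j} U†)]. -/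
theorem trace_fidelity_expansion (d : ℕ) (hd : 1 ≤ d) [NeZero d]
    (ρ : Matrix (ZMod d × ZMod d) (ZMod d × ZMod d) ℂ) (htr : ρ.trace = 1)
    (U : Matrix (ZMod d) (ZMod d) ℂ) (hU : U ∈ Matrix.unitaryGroup (ZMod d) ℂ) :
    (ρ * (((1 : Matrix (ZMod d) (ZMod d) ℂ) ⊗ₖ U) * phiProj d *
        ((1 : Matrix (ZMod d) (ZMod d) ℂ) ⊗ₖ Uᴴ))).trace
      = 1 / (d : ℂ) ^ 2 + (1 / (d : ℂ) ^ 2) *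
          ∑ ij ∈ Finset.univ.filter (fun ij : ZMod d × ZMod d => ij ≠ (0, 0)),
            (ρ * (A d ij.1 ij.2 ⊗ₖ (U * A d (-ij.1) ij.2 * Uᴴ))).trace :=
  trace_fidelity_expansion_general d ρ htr U hU
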